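/- Let n and τ be positive integers with τ < n and let G be a bipartite simple graph of order n with dissociation number τ. Then q(G) ≤ n, with equality if and only if G is isomorphic to the complete bipartite graph K_{τ,n−τ}. -/

import Mathlib

open scoped Classical

/-- A finset `S` of vertices is a dissociation set of `G`: the subgraph induced by `S`
has maximum degree at most one, i.e. every vertex of `S` has at most one neighbour
inside `S`. -/
def SimpleGraph.IsDissocSet {V : Type*} (G : SimpleGraph V) (S : Finset V) : Prop :=
  ∀ v ∈ S, ∀ u ∈ S, ∀ w ∈ S, G.Adj v u → G.Adj v w → u = w

/-- The dissociation number of `G`: the maximum cardinality of a dissociation set. -/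
noncomputable def SimpleGraph.dissocNum {V : Type*} [Fintype V] (G : SimpleGraph V) : ℕ :=
  sSup {k : ℕ | ∃ S : Finset V, G.IsDissocSet S ∧ S.card = k}

/-- The `A_α`-matrix `A_α(G) = α·D(G) + (1-α)·A(G)`. -/
noncomputable def SimpleGraph.Aalpha {V : Type*} [Fintype V] (G : SimpleGraph V) (α : ℝ) :
    Matrix V V ℝ := fun u v =>
  (if u = v then α * (G.degree u : ℝ) else 0) + (1 - α) * (if G.Adj u v then 1 else 0)

/-- The `A_α`-index of `G`: the largest eigenvalue of `A_α(G)`. -/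
noncomputable def SimpleGraph.lambdaAlpha {V : Type*} [Fintype V] (G : SimpleGraph V)
    (α : ℝ) : ℝ :=
  sSup {t : ℝ | ∃ x : V → ℝ, x ≠ 0 ∧ (G.Aalpha α).mulVec x = t • x}

/-- The signless Laplacian matrix `Q(G) = D(G) + A(G)`. -/
noncomputable def SimpleGraph.signlessLap {V : Type*} [Fintype V] (G : SimpleGraph V) :
    Matrix V V ℝ := fun u v =>
  (if u = v then (G.degree u : ℝ) else 0) + (if G.Adj u v then 1 else 0)

/-- The signless Laplacian spectral radius `q(G)`: the largest eigenvalue of `Q(G)`. -/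
noncomputable def SimpleGraph.qIndex {V : Type*} [Fintype V] (G : SimpleGraph V) : ℝ :=
  sSup {t : ℝ | ∃ x : V → ℝ, x ≠ 0 ∧ (G.signlessLap).mulVec x = t • x}

/-- The join `G ∨ H`: the disjoint union of `G` and `H` together with all edges between
the vertex sets of `G` and `H`. -/
def SimpleGraph.joinG {α β : Type*} (G : SimpleGraph α) (H : SimpleGraph β) :
    SimpleGraph (α ⊕ β) :=
  SimpleGraph.fromRel (fun a b =>
    match a, b with
    | Sum.inl x, Sum.inl y => G.Adj x y
    | Sum.inr x, Sum.inr y => H.Adj x y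
    | Sum.inl _, Sum.inr _ => True
    | Sum.inr _, Sum.inl _ => False)

/-- The disjoint union `G ∪ H`. -/
def SimpleGraph.unionG {α β : Type*} (G : SimpleGraph α) (H : SimpleGraph β) :
    SimpleGraph (α ⊕ β) :=
  SimpleGraph.fromRel (fun a b =>
    match a, b with
    | Sum.inl x, Sum.inl y => G.Adj x y
    | Sum.inr x, Sum.inr y => H.Adj x y
    | _, _ => False)

/-- `k·K₂`: the disjoint union of `k` copies of `K₂`. -/
def matchingGraph (k : ℕ) : SimpleGraph (Fin k × Fin 2) :=
  SimpleGraph.fromRel (fun a b => a.1 = b.1)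

/-- The star on `m` vertices, centred at `0`. -/
def starGraph (m : ℕ) : SimpleGraph (Fin m) :=
  SimpleGraph.fromRel (fun u _ => (u : ℕ) = 0)

/-- The tree `S†_{n,τ}`: take the star `S_{n-τ}` with centre `0` and leaves
`1,…,n-τ-1`; attach exactly two pendant vertices to each leaf of the star and
`3τ-2n+2` pendant vertices to the centre.  Here, with `m = n-τ-1`, vertex `0` is
the centre, vertices `1,…,m` are the star leaves, vertices `m+1,…,3m` are the
pendant vertices attached in consecutive pairs to the star leaves, and vertices
`3m+1,…,n-1` are the pendant vertices at the centre. -/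
def SdaggerGraph (n τ : ℕ) : SimpleGraph (Fin n) :=
  SimpleGraph.fromRel (fun u v =>
    ((u : ℕ) = 0 ∧ ((1 ≤ (v : ℕ) ∧ (v : ℕ) ≤ n - τ - 1) ∨ 3 * (n - τ - 1) < (v : ℕ))) ∨
    (1 ≤ (u : ℕ) ∧ (u : ℕ) ≤ n - τ - 1 ∧ n - τ - 1 < (v : ℕ) ∧ (v : ℕ) ≤ 3 * (n - τ - 1) ∧
      ((v : ℕ) - (n - τ - 1) - 1) / 2 + 1 = (u : ℕ)))

/-- The tree `S_{k₁,k₂}`: a star on `k₁+1` vertices (centre `0`, leaves `1,…,k₁`)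
together with `k₂` pendant paths of length two attached to the centre (the path
vertices are `k₁+1,…,k₁+2k₂`; a vertex at odd offset from `k₁` is adjacent to the
centre and to its successor). -/
def Skk (k₁ k₂ : ℕ) : SimpleGraph (Fin (1 + k₁ + 2 * k₂)) :=
  SimpleGraph.fromRel (fun u v =>
    ((u : ℕ) = 0 ∧ 1 ≤ (v : ℕ) ∧ (v : ℕ) ≤ k₁) ∨
    ((u : ℕ) = 0 ∧ k₁ < (v : ℕ) ∧ ((v : ℕ) - k₁) % 2 = 1) ∨
    (k₁ < (u : ℕ) ∧ ((u : ℕ) - k₁) % 2 = 1 ∧ (v : ℕ) = (u : ℕ) + 1))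

/-- The tree `T¹_{r,p}`: the path `0-1-2-3` on four vertices with `r` pendant paths of
length two attached to the leaf `0` (vertices `4,…,3+2r`) and `p` pendant paths of
length two attached to the leaf `3` (vertices `4+2r,…,3+2r+2p`). -/
def T1Graph (r p : ℕ) : SimpleGraph (Fin (4 + 2 * r + 2 * p)) :=
  SimpleGraph.fromRel (fun u v =>
    ((u : ℕ) + 1 = (v : ℕ) ∧ (v : ℕ) ≤ 3) ∨
    ((u : ℕ) = 0 ∧ 4 ≤ (v : ℕ) ∧ (v : ℕ) < 4 + 2 * r ∧ ((v : ℕ) - 4) % 2 = 0) ∨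
    ((u : ℕ) = 3 ∧ 4 + 2 * r ≤ (v : ℕ) ∧ ((v : ℕ) - 4) % 2 = 0) ∨
    (4 ≤ (u : ℕ) ∧ ((u : ℕ) - 4) % 2 = 0 ∧ (v : ℕ) = (u : ℕ) + 1))

/-- The tree `T²_{r,p}`: `T¹_{r,p}` together with one extra pendant vertex (the last
vertex) attached to the vertex of degree `r+1` of `T¹_{r,p}` (the vertex `0`). -/
def T2Graph (r p : ℕ) : SimpleGraph (Fin (5 + 2 * r + 2 * p)) :=
  SimpleGraph.fromRel (fun u v =>
    ((u : ℕ) + 1 = (v : ℕ) ∧ (v : ℕ) ≤ 3) ∨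
    ((u : ℕ) = 0 ∧ 4 ≤ (v : ℕ) ∧ (v : ℕ) < 4 + 2 * r ∧ ((v : ℕ) - 4) % 2 = 0) ∨
    ((u : ℕ) = 3 ∧ 4 + 2 * r ≤ (v : ℕ) ∧ (v : ℕ) < 4 + 2 * r + 2 * p ∧
      ((v : ℕ) - 4) % 2 = 0) ∨
    (4 ≤ (u : ℕ) ∧ (u : ℕ) < 4 + 2 * r + 2 * p ∧ ((u : ℕ) - 4) % 2 = 0 ∧
      (v : ℕ) = (u : ℕ) + 1) ∨
    ((u : ℕ) = 0 ∧ (v : ℕ) = 4 + 2 * r + 2 * p))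

/-- Subdivision of the edge `uv`: remove the edge `uv` and add one new vertex adjacent
to both `u` and `v`. -/
def SimpleGraph.subdivide {V : Type*} (G : SimpleGraph V) (u v : V) :
    SimpleGraph (V ⊕ Fin 1) :=
  SimpleGraph.fromRel (fun a b =>
    match a, b with
    | Sum.inl x, Sum.inl y => G.Adj x y ∧ ¬(x = u ∧ y = v) ∧ ¬(x = v ∧ y = u)
    | Sum.inl x, Sum.inr _ => x = u ∨ x = v
    | _, _ => False)

/-- Triple subdivision of the edge `uv`: remove the edge `uv` and add three new
vertices `0, 1, 2` forming a path `u - 0 - 1 - 2 - v`. -/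
def SimpleGraph.subdivide3 {V : Type*} (G : SimpleGraph V) (u v : V) :
    SimpleGraph (V ⊕ Fin 3) :=
  SimpleGraph.fromRel (fun a b =>
    match a, b with
    | Sum.inl x, Sum.inl y => G.Adj x y ∧ ¬(x = u ∧ y = v) ∧ ¬(x = v ∧ y = u)
    | Sum.inl x, Sum.inr i => (x = u ∧ i = (0 : Fin 3)) ∨ (x = v ∧ i = (2 : Fin 3))
    | Sum.inr i, Sum.inr j => (i : ℕ) + 1 = (j : ℕ)
    | Sum.inr _, Sum.inl _ => False)

/-- The edge `uv` lies on an internal path of `G`: a path both of whose endpoints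
have degree at least `3` and all of whose internal vertices have degree `2`. -/
def SimpleGraph.OnInternalPath {V : Type*} [Fintype V] (G : SimpleGraph V)
    (u v : V) : Prop :=
  ∃ (a b : V) (w : G.Walk a b), w.IsPath ∧ 3 ≤ G.degree a ∧ 3 ≤ G.degree b ∧
    (∀ x ∈ w.support, x ≠ a → x ≠ b → G.degree x = 2) ∧ s(u, v) ∈ w.edges

/-- The polynomial `P_α(x)` of Theorem 1.3. -/
noncomputable def Ppoly (α : ℝ) (n τ : ℕ) (x : ℝ) : ℝ :=
  x ^ 4 + α * ((n : ℝ) - 2 * τ - 6) * x ^ 3 +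
    (8 * α ^ 2 * τ - 4 * α ^ 2 * n + 4 * α * τ - 2 * α * n - 2 * τ + n + 9 * α ^ 2 +
      6 * α - 3) * x ^ 2 +
    α * (16 * α * n - α ^ 2 * n - 8 * n - 28 * α * τ + 14 * τ - 20 * α + 10) * x +
    (2 * α ^ 3 * n - 17 * α ^ 2 * n + 16 * α * n - 4 * n + 24 * α ^ 2 * τ - 24 * α * τ +
      6 * τ - 2 * α ^ 3 + 17 * α ^ 2 - 16 * α + 4)

/-- The cubic polynomial of Corollary 5.3. -/
noncomputable def Qpoly (n τ : ℕ) (x : ℝ) : ℝ :=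
  x ^ 3 + ((n : ℝ) - 2 * τ - 6) * x ^ 2 + (8 * (τ : ℝ) - 4 * n + 9) * x - (n : ℝ)

/-!
If `p` is a bipartition of `G`, flipping the sign of an eigenvector `x` of `Q(G)` on one side
gives a vector `y` with `xᵀ Q(G) x = yᵀ L(G) y`, and `n I - L(G) = L(Gᶜ) + J`. Hence an
eigenvalue `t` satisfies `2 (n - t) ‖x‖² = ∑_{uv ∉ E} (y u - y v)² + 2 (∑ y)² ≥ 0`. When `t = n`,
`y` is constant across non-edges and sums to zero; a non-edge between the two sides would make
`y` constant, hence zero, so `G` is complete bipartite. Its sides are independent sets, while a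
largest dissociation set lies in one side or has at most two vertices, so one side has exactly
`τ` vertices. Conversely `K_{a,b}` has the eigenvector `(b, …, b, a, …, a)` for `a + b`.
-/

open scoped Matrix

theorem Fintype.sum_sum_sub_sq {ι R : Type*} [Fintype ι] [CommRing R] (f : ι → R) :
    ∑ i, ∑ j, (f i - f j) ^ 2 = 2 * (Fintype.card ι * ∑ i, f i ^ 2 - (∑ i, f i) ^ 2) := by
  simp only [sub_sq, Finset.sum_add_distrib, Finset.sum_sub_distrib, Finset.sum_const,
    Finset.card_univ, nsmul_eq_mul, ← Finset.mul_sum, ← Finset.sum_mul]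
  ring

namespace SimpleGraph

variable {V W : Type*}

noncomputable def flipSign (p : V → Prop) (x : V → ℝ) (v : V) : ℝ := if p v then x v else -x v

theorem flipSign_sq (p : V → Prop) (x : V → ℝ) (v : V) : flipSign p x v ^ 2 = x v ^ 2 := by
  unfold flipSign
  split_ifs <;> ring

theorem flipSign_eq_zero {p : V → Prop} {x : V → ℝ} : flipSign p x = 0 ↔ x = 0 := by
  simp only [funext_iff, Pi.zero_apply, flipSign]
  refine forall_congr' fun v => ?_
  split_ifs <;> simp

theorem add_sq_eq_flipSign_sub_sq {p : V → Prop} (x : V → ℝ) {u v : V} (h : Xor (p u) (p v)) :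
    (x u + x v) ^ 2 = (flipSign p x u - flipSign p x v) ^ 2 := by
  unfold flipSign
  rcases h with ⟨hu, hv⟩ | ⟨hv, hu⟩ <;> simp only [hu, hv, if_true, if_false] <;> ring

theorem Coloring.xor_eq_zero_of_adj {G : SimpleGraph V} (C : G.Coloring (Fin 2)) {u v : V}
    (h : G.Adj u v) : Xor (C u = 0) (C v = 0) := by
  have hne := C.valid h
  generalize C u = a at hne ⊢
  generalize C v = b at hne ⊢
  revert a b
  decide

section SignlessLaplacian

variable [Fintype V] [Fintype W] (G : SimpleGraph V)

theorem signlessLap_mulVec_apply (x : V → ℝ) (u : V) :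
    (G.signlessLap *ᵥ x) u = ∑ v, if G.Adj u v then x u + x v else 0 := by
  have hdeg : ∑ v, (if G.Adj u v then x u else 0) = G.degree u * x u := by
    rw [← Finset.sum_filter, Finset.sum_const, nsmul_eq_mul, degree, neighborFinset_eq_filter]
  simp only [Matrix.mulVec, dotProduct, signlessLap, add_mul, Finset.sum_add_distrib, ite_mul,
    zero_mul, one_mul, Finset.sum_ite_eq, Finset.mem_univ, if_true, ← hdeg]
  rw [← Finset.sum_add_distrib]
  refine Finset.sum_congr rfl fun v _ => ?_
  split_ifs <;> ring

theorem two_mul_dotProduct_signlessLap_mulVec (x : V → ℝ) :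
    2 * (x ⬝ᵥ G.signlessLap *ᵥ x) = ∑ u, ∑ v, if G.Adj u v then (x u + x v) ^ 2 else 0 := by
  have hform : x ⬝ᵥ G.signlessLap *ᵥ x =
      ∑ u, ∑ v, if G.Adj u v then x u * (x u + x v) else 0 := by
    simp only [dotProduct, signlessLap_mulVec_apply, Finset.mul_sum, mul_ite, mul_zero]
  have hswap : (∑ u, ∑ v, if G.Adj u v then x u * (x u + x v) else 0) =
      ∑ u, ∑ v, if G.Adj u v then x v * (x v + x u) else 0 := by
    rw [Finset.sum_comm]
    simp_rw [G.adj_comm]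
  rw [two_mul, hform]
  nth_rw 2 [hswap]
  simp only [← Finset.sum_add_distrib]
  refine Finset.sum_congr rfl fun u _ => Finset.sum_congr rfl fun v _ => ?_
  split_ifs <;> ring

def IsSignlessLapEigenvalue (t : ℝ) : Prop :=
  ∃ x : V → ℝ, x ≠ 0 ∧ G.signlessLap *ᵥ x = t • x

theorem qIndex_eq_sSup : G.qIndex = sSup {t | G.IsSignlessLapEigenvalue t} := rfl

theorem finite_setOf_isSignlessLapEigenvalue : {t | G.IsSignlessLapEigenvalue t}.Finite := by
  refine (Module.End.finite_hasEigenvalue (Matrix.mulVecLin G.signlessLap)).subset ?_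
  rintro t ⟨x, hx, hev⟩
  exact Module.End.hasEigenvalue_of_hasEigenvector
    ⟨Module.End.mem_eigenspace_iff.mpr (by simpa [Matrix.mulVecLin_apply] using hev), hx⟩

variable {G}

theorem IsSignlessLapEigenvalue.le_qIndex {t : ℝ} (h : G.IsSignlessLapEigenvalue t) :
    t ≤ G.qIndex :=
  le_csSup G.finite_setOf_isSignlessLapEigenvalue.bddAbove h

theorem qIndex_le {c : ℝ} (hc : 0 ≤ c) (h : ∀ t, G.IsSignlessLapEigenvalue t → t ≤ c) :
    G.qIndex ≤ c :=
  Real.sSup_le h hc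

-- `sSup ∅ = 0`, so a nonzero `qIndex` is attained.
theorem isSignlessLapEigenvalue_qIndex (h : G.qIndex ≠ 0) :
    G.IsSignlessLapEigenvalue G.qIndex := by
  have hne : {t | G.IsSignlessLapEigenvalue t}.Nonempty := by
    by_contra hempty
    rw [Set.not_nonempty_iff_eq_empty] at hempty
    exact h (by rw [qIndex_eq_sSup, hempty, Real.sSup_empty])
  exact hne.csSup_mem G.finite_setOf_isSignlessLapEigenvalue

theorem Iso.isSignlessLapEigenvalue {H : SimpleGraph W} (e : G ≃g H) {t : ℝ}
    (h : H.IsSignlessLapEigenvalue t) : G.IsSignlessLapEigenvalue t := by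
  obtain ⟨x, hx, hev⟩ := h
  refine ⟨x ∘ e, fun hz => hx (funext fun w => by simpa using congrFun hz (e.symm w)), ?_⟩
  funext u
  have hcomp : (H.signlessLap *ᵥ x) (e u) = (G.signlessLap *ᵥ (x ∘ e)) u := by
    rw [signlessLap_mulVec_apply, signlessLap_mulVec_apply,
      ← Equiv.sum_comp e.toEquiv]
    simp only [RelIso.coe_fn_toEquiv, e.map_adj_iff, Function.comp_apply]
  rw [← hcomp, hev]
  rfl

theorem Iso.qIndex_eq {H : SimpleGraph W} (e : G ≃g H) : G.qIndex = H.qIndex := by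
  simp only [qIndex_eq_sSup]
  congr 1
  ext t
  exact ⟨e.symm.isSignlessLapEigenvalue, e.isSignlessLapEigenvalue⟩

end SignlessLaplacian

section Bipartite

variable [Fintype V] {G : SimpleGraph V} {p : V → Prop}

theorem two_mul_card_sub_mul_sum_sq (hp : ∀ ⦃u v⦄, G.Adj u v → Xor (p u) (p v))
    {t : ℝ} {x : V → ℝ} (hev : G.signlessLap *ᵥ x = t • x) :
    2 * ((Fintype.card V - t) * ∑ v, x v ^ 2) =
      (∑ u, ∑ v, if G.Adj u v then 0 else (flipSign p x u - flipSign p x v) ^ 2) +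
        2 * (∑ v, flipSign p x v) ^ 2 := by
  set y := flipSign p x
  have hquad : 2 * (t * ∑ v, x v ^ 2) =
      ∑ u, ∑ v, if G.Adj u v then (y u - y v) ^ 2 else 0 := by
    have hform : x ⬝ᵥ G.signlessLap *ᵥ x = t * ∑ v, x v ^ 2 := by
      rw [hev, dotProduct_smul, smul_eq_mul]
      simp only [dotProduct, sq]
    rw [← hform, G.two_mul_dotProduct_signlessLap_mulVec]
    refine Finset.sum_congr rfl fun u _ => Finset.sum_congr rfl fun v _ => ?_
    split_ifs with huv
    · exact add_sq_eq_flipSign_sub_sq x (hp huv)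
    · rfl
  have hsplit : ∑ u, ∑ v, (y u - y v) ^ 2 =
      (∑ u, ∑ v, if G.Adj u v then (y u - y v) ^ 2 else 0) +
        ∑ u, ∑ v, if G.Adj u v then 0 else (y u - y v) ^ 2 := by
    simp only [← Finset.sum_add_distrib]
    refine Finset.sum_congr rfl fun u _ => Finset.sum_congr rfl fun v _ => ?_
    split_ifs <;> simp
  have hnorm : ∑ v, y v ^ 2 = ∑ v, x v ^ 2 := Finset.sum_congr rfl fun v _ => flipSign_sq p x v
  rw [Fintype.sum_sum_sub_sq, hnorm, ← hquad] at hsplit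
  linear_combination hsplit

theorem le_card_of_isSignlessLapEigenvalue (hp : ∀ ⦃u v⦄, G.Adj u v → Xor (p u) (p v))
    {t : ℝ} (ht : G.IsSignlessLapEigenvalue t) : t ≤ Fintype.card V := by
  obtain ⟨x, hx, hev⟩ := ht
  have hid := two_mul_card_sub_mul_sum_sq hp hev
  have hpos : 0 < ∑ v, x v ^ 2 := by
    obtain ⟨v, hv⟩ := Function.ne_iff.mp hx
    exact Finset.sum_pos' (fun v _ => sq_nonneg _)
      ⟨v, Finset.mem_univ v, pow_two_pos_of_ne_zero hv⟩
  have hrhs : 0 ≤ (∑ u, ∑ v, if G.Adj u v then 0 else (flipSign p x u - flipSign p x v) ^ 2) +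
      2 * (∑ v, flipSign p x v) ^ 2 := by positivity
  nlinarith

theorem qIndex_le_card (hp : ∀ ⦃u v⦄, G.Adj u v → Xor (p u) (p v)) :
    G.qIndex ≤ Fintype.card V :=
  qIndex_le (Nat.cast_nonneg _) fun _ ht => le_card_of_isSignlessLapEigenvalue hp ht

theorem adj_of_isSignlessLapEigenvalue_card (hp : ∀ ⦃u v⦄, G.Adj u v → Xor (p u) (p v))
    (hn : G.IsSignlessLapEigenvalue (Fintype.card V)) {u v : V} (huv : Xor (p u) (p v)) :
    G.Adj u v := by
  obtain ⟨x, hx, hev⟩ := hn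
  have hid := two_mul_card_sub_mul_sum_sq hp hev
  rw [sub_self, zero_mul, mul_zero] at hid
  set y := flipSign p x
  set D := ∑ a, ∑ b, if G.Adj a b then 0 else (y a - y b) ^ 2
  have hD : 0 ≤ D := by positivity
  have hsum : ∑ v, y v = 0 := pow_eq_zero_iff two_ne_zero |>.mp (by nlinarith)
  have hnonadj : ∀ a b, ¬ G.Adj a b → y a = y b := by
    intro a b hab
    have hzero := (Fintype.sum_eq_zero_iff_of_nonneg (fun _ => by positivity)).mp
      (by nlinarith : D = 0)
    have hab0 := congrFun ((Fintype.sum_eq_zero_iff_of_nonneg (fun _ => by positivity)).mp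
      (congrFun hzero a)) b
    simp only [if_neg hab, Pi.zero_apply] at hab0
    exact sub_eq_zero.mp (pow_eq_zero_iff two_ne_zero |>.mp hab0)
  by_contra hnuv
  -- A vertex adjacent to both `u` and `v` would lie on neither side.
  have hconst : ∀ w, y w = y u := by
    intro w
    by_cases hwu : G.Adj w u
    · have hwv : ¬ G.Adj w v := fun hwv => by
        have hwu' := hp hwu
        have hwv' := hp hwv
        rw [xor_iff_not_iff] at hwu' hwv' huv
        tauto
      exact (hnonadj w v hwv).trans (hnonadj u v hnuv).symm
    · exact hnonadj w u hwu
  have hyu : y u = 0 := by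
    have hcard : (Fintype.card V : ℝ) ≠ 0 :=
      Nat.cast_ne_zero.mpr (Fintype.card_pos_iff.mpr ⟨u⟩).ne'
    simpa [hconst, hcard] using hsum
  exact hx (flipSign_eq_zero.mp (funext fun w => (hconst w).trans hyu))

theorem isSignlessLapEigenvalue_completeBipartiteGraph (α β : Type*) [Fintype α] [Fintype β]
    [Nonempty α] [Nonempty β] :
    (completeBipartiteGraph α β).IsSignlessLapEigenvalue (Fintype.card α + Fintype.card β) := by
  refine ⟨Sum.elim (fun _ => (Fintype.card β : ℝ)) (fun _ => Fintype.card α), fun h => ?_, ?_⟩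
  · have := congrFun h (Sum.inl (Classical.arbitrary α))
    simp at this
  · funext w
    rw [signlessLap_mulVec_apply, Fintype.sum_sum_type]
    cases w <;> simp [Finset.card_univ] <;> ring

theorem qIndex_completeBipartiteGraph (α β : Type*) [Fintype α] [Fintype β]
    [Nonempty α] [Nonempty β] :
    (completeBipartiteGraph α β).qIndex = Fintype.card α + Fintype.card β := by
  refine le_antisymm ?_ (isSignlessLapEigenvalue_completeBipartiteGraph α β).le_qIndex
  have hp : ∀ ⦃u v⦄, (completeBipartiteGraph α β).Adj u v → Xor u.isLeft v.isLeft := by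
    rintro (a | b) (a' | b') h <;> simp_all
  simpa using qIndex_le_card hp

end Bipartite

section Dissociation

variable {G : SimpleGraph V} {p : V → Prop} [DecidablePred p]

theorem IsDissocSet.card_filter_le_one (hG : ∀ u v, G.Adj u v ↔ Xor (p u) (p v))
    {S : Finset V} (hS : G.IsDissocSet S) {w : V} (hw : w ∈ S) (hpw : ¬ p w) :
    (S.filter p).card ≤ 1 := by
  refine Finset.card_le_one.mpr fun a ha b hb => ?_
  rw [Finset.mem_filter] at ha hb
  exact hS w hw a ha.1 b hb.1 ((hG w a).mpr (Or.inr ⟨ha.2, hpw⟩))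
    ((hG w b).mpr (Or.inr ⟨hb.2, hpw⟩))

variable [Fintype V]

theorem bddAbove_setOf_isDissocSet_card :
    BddAbove {k : ℕ | ∃ S : Finset V, G.IsDissocSet S ∧ S.card = k} := by
  refine ⟨Fintype.card V, ?_⟩
  rintro k ⟨S, -, rfl⟩
  exact S.card_le_univ

theorem IsDissocSet.card_le_dissocNum {S : Finset V} (hS : G.IsDissocSet S) :
    S.card ≤ G.dissocNum :=
  le_csSup bddAbove_setOf_isDissocSet_card ⟨S, hS, rfl⟩

theorem exists_isDissocSet_card_eq_dissocNum :
    ∃ S : Finset V, G.IsDissocSet S ∧ S.card = G.dissocNum :=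
  Nat.sSup_mem (by exact ⟨0, ∅, by simp [IsDissocSet], rfl⟩) bddAbove_setOf_isDissocSet_card

theorem isDissocSet_filter (hp : ∀ ⦃u v⦄, G.Adj u v → Xor (p u) (p v)) :
    G.IsDissocSet (Finset.univ.filter p) := by
  intro v hv u hu _ _ hvu _
  simp only [Finset.mem_filter, Finset.mem_univ, true_and] at hv hu
  simp only [xor_iff_not_iff] at hp
  exact absurd (iff_of_true hv hu) (hp hvu)

theorem dissocNum_eq_card_or_eq_card (hG : ∀ u v, G.Adj u v ↔ Xor (p u) (p v))
    (h : G.dissocNum < Fintype.card V) :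
    G.dissocNum = Fintype.card {v // p v} ∨ G.dissocNum = Fintype.card {v // ¬ p v} := by
  have hG' : ∀ u v, G.Adj u v ↔ Xor (¬ p u) (¬ p v) := fun u v => (hG u v).trans xor_not_not.symm
  obtain ⟨S, hS, hcard⟩ := exists_isDissocSet_card_eq_dissocNum (G := G)
  have hA := (isDissocSet_filter fun u v huv => (hG u v).mp huv).card_le_dissocNum
  have hB := (isDissocSet_filter fun u v huv => (hG' u v).mp huv).card_le_dissocNum
  have hSA := Finset.card_le_card (Finset.filter_subset_filter p (Finset.subset_univ S))
  have hSB := Finset.card_le_card (Finset.filter_subset_filter (¬ p ·) (Finset.subset_univ S))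
  have hAB := Finset.card_filter_add_card_filter_not (s := Finset.univ) p
  have hSAB := Finset.card_filter_add_card_filter_not (s := S) p
  have h1 : (S.filter p).card ≤ 1 ∨ (S.filter (¬ p ·)).card = 0 := by
    by_cases hw : ∃ w ∈ S, ¬ p w
    · obtain ⟨w, hw, hpw⟩ := hw
      exact Or.inl (hS.card_filter_le_one hG hw hpw)
    · push Not at hw
      exact Or.inr (Finset.card_eq_zero.mpr (Finset.filter_eq_empty_iff.mpr fun v hv => by
        simpa using hw v hv))
  have h2 : (S.filter (¬ p ·)).card ≤ 1 ∨ (S.filter p).card = 0 := by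
    by_cases hw : ∃ w ∈ S, p w
    · obtain ⟨w, hw, hpw⟩ := hw
      exact Or.inl (hS.card_filter_le_one hG' hw (not_not.mpr hpw))
    · push Not at hw
      exact Or.inr (Finset.card_eq_zero.mpr (Finset.filter_eq_empty_iff.mpr hw))
  simp only [Finset.card_univ] at hAB
  simpa only [Fintype.card_subtype] using (by omega : G.dissocNum = (Finset.univ.filter p).card ∨
    G.dissocNum = (Finset.univ.filter (¬ p ·)).card)

theorem nonempty_iso_completeBipartiteGraph (hG : ∀ u v, G.Adj u v ↔ Xor (p u) (p v))
    {k : ℕ} (hk : Fintype.card {v // p v} = k) :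
    Nonempty (G ≃g completeBipartiteGraph (Fin k) (Fin (Fintype.card V - k))) := by
  let e : G ≃g completeBipartiteGraph {v // p v} {v // ¬ p v} :=
    ⟨(Equiv.sumCompl p).symm, fun {u v} => by
      rw [hG]
      by_cases hu : p u <;> by_cases hv : p v <;>
        simp [Equiv.sumCompl_symm_apply_of_pos, Equiv.sumCompl_symm_apply_of_neg, hu, hv]⟩
  exact ⟨e.trans (completeBipartiteGraphCongr (Fintype.equivFinOfCardEq hk)
    (Fintype.equivFinOfCardEq (by rw [Fintype.card_subtype_compl, hk])))⟩

theorem nonempty_iso_completeBipartiteGraph_dissocNum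
    (hG : ∀ u v, G.Adj u v ↔ Xor (p u) (p v)) (h : G.dissocNum < Fintype.card V) :
    Nonempty (G ≃g completeBipartiteGraph (Fin G.dissocNum)
      (Fin (Fintype.card V - G.dissocNum))) := by
  rcases dissocNum_eq_card_or_eq_card hG h with hk | hk
  · exact nonempty_iso_completeBipartiteGraph hG hk.symm
  · exact nonempty_iso_completeBipartiteGraph (p := (¬ p ·))
      (fun u v => (hG u v).trans xor_not_not.symm) hk.symm

end Dissociation

end SimpleGraph

open SimpleGraph

theorem bipartite_q_bound_general (n τ : ℕ) (hτ : 0 < τ) (hτn : τ < n)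
    (G : SimpleGraph (Fin n)) (hbip : G.Colorable 2) (hdis : G.dissocNum = τ) :
    G.qIndex ≤ (n : ℝ) ∧
    (G.qIndex = (n : ℝ) ↔ Nonempty (G ≃g completeBipartiteGraph (Fin τ) (Fin (n - τ)))) := by
  obtain ⟨C⟩ := hbip
  have hp : ∀ ⦃u v⦄, G.Adj u v → Xor (C u = 0) (C v = 0) := fun _ _ => C.xor_eq_zero_of_adj
  have hq : G.qIndex ≤ n := by simpa using qIndex_le_card hp
  refine ⟨hq, fun heq => ?_, fun ⟨e⟩ => ?_⟩
  · have hn : G.IsSignlessLapEigenvalue (Fintype.card (Fin n)) := by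
      have hne : G.qIndex ≠ 0 := by rw [heq]; exact Nat.cast_ne_zero.mpr (by omega)
      simpa [heq] using isSignlessLapEigenvalue_qIndex hne
    have hG : ∀ u v, G.Adj u v ↔ Xor (C u = 0) (C v = 0) :=
      fun u v => ⟨(hp ·), adj_of_isSignlessLapEigenvalue_card hp hn⟩
    subst hdis
    have hiso := nonempty_iso_completeBipartiteGraph_dissocNum hG (by simpa using hτn)
    rwa [Fintype.card_fin] at hiso
  · have : Nonempty (Fin τ) := Fin.pos_iff_nonempty.mp hτ
    have : Nonempty (Fin (n - τ)) := Fin.pos_iff_nonempty.mp (Nat.sub_pos_of_lt hτn)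
    rw [e.qIndex_eq, qIndex_completeBipartiteGraph, Fintype.card_fin, Fintype.card_fin,
      Nat.cast_sub hτn.le, add_sub_cancel]

/-- **Corollary 5.2.** If `G` is a bipartite graph of order `n` with dissociation
number `τ`, then `q(G) ≤ n` with equality iff `G ≅ K_{τ,n-τ}`. -/
theorem bipartite_q_bound (n τ : ℕ) (hn : 0 < n) (hτ : 0 < τ) (hτn : τ < n)
    (G : SimpleGraph (Fin n)) (hbip : G.Colorable 2) (hdis : G.dissocNum = τ) :
    G.qIndex ≤ (n : ℝ) ∧
    (G.qIndex = (n : ℝ) ↔ Nonempty (G ≃g completeBipartiteGraph (Fin τ) (Fin (n - τ)))) :=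
  bipartite_q_bound_general n τ hτ hτn G hbip hdis
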